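/- For $d \geq 2$, the link of any vertex in a stacked $d$-sphere is a stacked $(d-1)$-sphere. -/

import Mathlib

open Finset

noncomputable section

attribute [local instance] Classical.propDecidable

variable {V : Type} [DecidableEq V]

/-- A (finite abstract) simplicial complex: a finite family of nonempty finite sets (faces)
closed under taking nonempty subsets. -/
def IsComplex (K : Finset (Finset V)) : Prop :=
  (∀ s ∈ K, s.Nonempty) ∧ ∀ s ∈ K, ∀ t ⊆ s, t.Nonempty → t ∈ K

/-- The vertex set of a complex: the union of its faces. -/
def vertexSet (K : Finset (Finset V)) : Finset V := K.sup id

/-- A facet is a maximal face. -/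
def IsFacet (K : Finset (Finset V)) (s : Finset V) : Prop :=
  s ∈ K ∧ ∀ t ∈ K, s ⊆ t → s = t

/-- A complex is pure of dimension `d` if it is nonempty and every facet has `d + 1` vertices. -/
def IsPure (K : Finset (Finset V)) (d : ℕ) : Prop :=
  K.Nonempty ∧ ∀ s, IsFacet K s → s.card = d + 1

/-- The edge graph (1-skeleton) of a complex. -/
def edgeGraph (K : Finset (Finset V)) : SimpleGraph V where
  Adj x y := x ≠ y ∧ ({x, y} : Finset V) ∈ K
  symm := by
    constructor
    intro x y h
    refine ⟨h.1.symm, ?_⟩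
    rw [Finset.pair_comm]
    exact h.2
  loopless := by
    constructor
    intro x h
    exact h.1 rfl

/-- A complex is connected if it has a vertex and any two of its vertices are joined by a
path in its edge graph. -/
def CConnected (K : Finset (Finset V)) : Prop :=
  (vertexSet K).Nonempty ∧
    ∀ u ∈ vertexSet K, ∀ v ∈ vertexSet K, (edgeGraph K).Reachable u v

/-- The link of a face `α`: all faces `β` disjoint from `α` with `α ∪ β` a face. -/
def link (K : Finset (Finset V)) (α : Finset V) : Finset (Finset V) :=
  K.filter fun β => Disjoint α β ∧ α ∪ β ∈ K

/-- The number of edges (1-dimensional faces) of a complex. -/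
def edgeCount (K : Finset (Finset V)) : ℕ := (K.filter fun s => s.card = 2).card

/-- A weak pseudomanifold of dimension `d`: a pure `d`-dimensional complex in which every
`(d-1)`-dimensional face lies in exactly two facets. -/
def IsWeakPM (K : Finset (Finset V)) (d : ℕ) : Prop :=
  IsComplex K ∧ IsPure K d ∧
    ∀ s ∈ K, s.card = d → (K.filter fun t => IsFacet K t ∧ s ⊆ t).card = 2

/-- A normal `d`-pseudomanifold: a connected weak pseudomanifold of dimension `d` in which
the link of every face of dimension at most `d - 2` is connected. -/
def IsNormalPM (K : Finset (Finset V)) (d : ℕ) : Prop :=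
  IsWeakPM K d ∧ CConnected K ∧
    ∀ s ∈ K, s.card ≤ d - 1 → CConnected (link K s)

/-- The standard `d`-sphere: the complex of all nonempty proper subsets of a `(d+2)`-set. -/
def IsStandardSphere (K : Finset (Finset V)) (d : ℕ) : Prop :=
  ∃ A : Finset V, A.card = d + 2 ∧ K = A.powerset.filter fun s => s.Nonempty ∧ s ≠ A

/-- `StarringOf X Y` : `Y` is obtained from `X` by starring a new vertex `v` in a facet
`σ` of `X`, i.e. by replacing the facet `σ` with the cone with apex `v` over its boundary. -/
def StarringOf (X Y : Finset (Finset V)) : Prop :=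
  ∃ (σ : Finset V) (v : V), IsFacet X σ ∧ v ∉ vertexSet X ∧
    Y = X.erase σ ∪ (σ.powerset.filter fun τ => τ ≠ σ).image fun τ => insert v τ

/-- A stacked `d`-sphere: a complex obtained from the standard `d`-sphere by a finite
sequence of starrings. -/
def IsStackedSphere (K : Finset (Finset V)) (d : ℕ) : Prop :=
  ∃ S : Finset (Finset V), IsStandardSphere S d ∧ Relation.ReflTransGen StarringOf S K

/-- The induced subcomplex on a set `U` of vertices. -/
def induced (K : Finset (Finset V)) (U : Finset V) : Finset (Finset V) :=
  K.filter fun s => s ⊆ U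

/-- The simplicial complement of the induced subcomplex on `U`: the induced subcomplex on
the complementary set of vertices. -/
def simpComplement (K : Finset (Finset V)) (U : Finset V) : Finset (Finset V) :=
  induced K (vertexSet K \ U)

/-- The degree of a vertex: the number of vertices of its link. -/
def vertDegree (K : Finset (Finset V)) (v : V) : ℕ := (vertexSet (link K {v})).card

/-- `farApart G x y` : the distance from `x` to `y` in the graph `G` is at least `3`
(where unreachable counts as infinite distance). -/
def farApart (G : SimpleGraph V) (x y : V) : Prop :=
  x ≠ y ∧ ¬ G.Adj x y ∧ ∀ z : V, ¬ (G.Adj x z ∧ G.Adj z y)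

/-- `Admissible X σ₁ σ₂ ψ` : `σ₁, σ₂` are disjoint facets of `X` and `ψ` restricts to a
bijection from `σ₁` onto `σ₂` moving every `x ∈ σ₁` to distance at least 3 from itself. -/
def Admissible (X : Finset (Finset V)) (σ₁ σ₂ : Finset V) (ψ : V → V) : Prop :=
  IsFacet X σ₁ ∧ IsFacet X σ₂ ∧ Disjoint σ₁ σ₂ ∧ Set.BijOn ψ ↑σ₁ ↑σ₂ ∧
    ∀ x ∈ σ₁, farApart (edgeGraph X) x (ψ x)

/-- Elementary handle addition `X^ψ`: remove the two facets `σ₁, σ₂` and identify each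
`x ∈ σ₁` with `ψ x ∈ σ₂`. -/
def handleAdd (X : Finset (Finset V)) (σ₁ σ₂ : Finset V) (ψ : V → V) :
    Finset (Finset V) :=
  ((X.erase σ₁).erase σ₂).image fun s => s.image fun x => if x ∈ σ₁ then ψ x else x

/-- Isomorphism of simplicial complexes: an injection on vertices carrying the faces of one
complex exactly onto the faces of the other. -/
def CplxIso {W : Type} [DecidableEq W] (K : Finset (Finset V)) (L : Finset (Finset W)) :
    Prop :=
  ∃ f : V → W, Set.InjOn f ↑(vertexSet K) ∧ L = K.image fun s => s.image f

/-- The connected component of the complex `K` containing the vertex `v` (as a subcomplex). -/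
def componentOf (K : Finset (Finset V)) (v : V) : Finset (Finset V) :=
  K.filter fun s => ∀ x ∈ s, (edgeGraph K).Reachable v x

/-- The edges of `M` having exactly one end in `A`. -/
def crossEdges (M : Finset (Finset V)) (A : Finset V) : Finset (Finset V) :=
  M.filter fun e => e.card = 2 ∧ (e ∩ A).card = 1

/-- The graph whose vertices are the edges of `M` with exactly one end in `A`, two of them
being adjacent when the union of the corresponding edges is a 2-dimensional face of `M`. -/
def crossGraph (M : Finset (Finset V)) (A : Finset V) : SimpleGraph (Finset V) where
  Adj e f := e ≠ f ∧ e ∈ crossEdges M A ∧ f ∈ crossEdges M A ∧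
    e ∪ f ∈ M ∧ (e ∪ f).card = 3
  symm := by
    constructor
    intro e f h
    obtain ⟨h1, h2, h3, h4, h5⟩ := h
    exact ⟨h1.symm, h3, h2, by rwa [Finset.union_comm], by rwa [Finset.union_comm]⟩
  loopless := by
    constructor
    intro e h
    exact h.1 rfl

/-- The class `𝒦(d)`: normal `d`-pseudomanifolds all of whose vertex links are stacked
`(d-1)`-spheres. -/
def InClassK (K : Finset (Finset V)) (d : ℕ) : Prop :=
  IsNormalPM K d ∧ ∀ v ∈ vertexSet K, IsStackedSphere (link K {v}) (d - 1)

/-- The total number of partitions of `n`. -/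
def numPartitions (n : ℕ) : ℕ := Fintype.card (Nat.Partition n)

/-- The number of even partitions of `n` (those with an even number of even parts). -/
def numEvenPartitions (n : ℕ) : ℕ :=
  Fintype.card {p : Nat.Partition n // Even (Multiset.card (p.parts.filter fun i => Even i))}

/-- The number of odd partitions of `n` (those with an odd number of even parts). -/
def numOddPartitions (n : ℕ) : ℕ :=
  Fintype.card {p : Nat.Partition n // Odd (Multiset.card (p.parts.filter fun i => Even i))}

/-- The facets of `N^{d+1}_{m+d+1}` : the sets of `d+2` consecutive integers inside
`{1, …, m+d+1}`. -/
def NFacets (d m : ℕ) : Finset (Finset ℕ) :=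
  (Finset.Icc 1 m).image fun k => Finset.Icc k (k + d + 1)

/-- The complex `N^{d+1}_{m+d+1}` on vertex set `{1, …, m+d+1}` whose facets are the sets
of `d+2` consecutive integers. -/
def Ncomplex (d m : ℕ) : Finset (Finset ℕ) :=
  ((NFacets d m).biUnion Finset.powerset).filter fun s => s.Nonempty

/-- The facets of the boundary complex `∂N^{d+1}_{m+d+1}` : the `(d+1)`-element subsets of
`{1, …, m+d+1}` contained in exactly one facet of `N^{d+1}_{m+d+1}`. -/
def boundaryNFacets (d m : ℕ) : Finset (Finset ℕ) :=
  (Finset.Icc 1 (m + d + 1)).powerset.filter fun s =>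
    s.card = d + 1 ∧ ((Finset.Icc 1 m).filter fun k => s ⊆ Finset.Icc k (k + d + 1)).card = 1

/-- The boundary complex `∂N^{d+1}_{m+d+1}`. -/
def boundaryN (d m : ℕ) : Finset (Finset ℕ) :=
  ((boundaryNFacets d m).biUnion Finset.powerset).filter fun s => s.Nonempty

/-! Starring a new vertex `w` in a facet `σ` changes the vertex links only locally: the link
of `w` is the boundary of `σ`, a standard sphere; for `u ∈ σ` the new link arises from the old
one by starring `w` in its facet `σ \ {u}`; all other links are unchanged. Since the vertex
links of a standard sphere are standard spheres, induction along the starrings proves the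
theorem. -/

theorem mem_vertexSet {K : Finset (Finset V)} {x : V} :
    x ∈ vertexSet K ↔ ∃ s ∈ K, x ∈ s := by
  simp [vertexSet]

theorem subset_vertexSet {K : Finset (Finset V)} {s : Finset V} (hs : s ∈ K) :
    s ⊆ vertexSet K :=
  fun _ hx => mem_vertexSet.2 ⟨s, hs, hx⟩

theorem notMem_of_notMem_vertexSet {K : Finset (Finset V)} {s : Finset V} {x : V}
    (hx : x ∉ vertexSet K) (hs : s ∈ K) : x ∉ s :=
  fun h => hx (subset_vertexSet hs h)

theorem mem_link_singleton {K : Finset (Finset V)} {v : V} {β : Finset V} :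
    β ∈ link K {v} ↔ β ∈ K ∧ v ∉ β ∧ insert v β ∈ K := by
  simp [link]

theorem vertexSet_link_subset (K : Finset (Finset V)) (u : V) :
    vertexSet (link K {u}) ⊆ vertexSet K :=
  Finset.sup_mono (Finset.filter_subset _ K)

theorem isFacet_link_erase {K : Finset (Finset V)} {σ : Finset V} {u : V} (hK : IsComplex K)
    (hσ : IsFacet K σ) (huσ : u ∈ σ) (hσ2 : 2 ≤ σ.card) : IsFacet (link K {u}) (σ.erase u) := by
  refine ⟨mem_link_singleton.2 ⟨hK.2 σ hσ.1 _ (Finset.erase_subset u σ) ?_,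
    Finset.notMem_erase u σ, by rw [Finset.insert_erase huσ]; exact hσ.1⟩, fun t ht hσt => ?_⟩
  · rw [← Finset.card_pos, Finset.card_erase_of_mem huσ]
    omega
  · obtain ⟨-, hut, htK⟩ := mem_link_singleton.1 ht
    have := hσ.2 _ htK (by grind)
    grind

namespace IsStandardSphere

variable {S : Finset (Finset V)} {d : ℕ}

theorem isComplex (h : IsStandardSphere S d) : IsComplex S := by
  obtain ⟨A, -, rfl⟩ := h
  refine ⟨fun s hs => (Finset.mem_filter.1 hs).2.1, fun s hs t hts ht => ?_⟩
  simp only [Finset.mem_filter, Finset.mem_powerset] at hs ⊢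
  grind

theorem card_of_isFacet (h : IsStandardSphere S d) {s : Finset V} (hs : IsFacet S s) :
    s.card = d + 1 := by
  obtain ⟨A, hA, rfl⟩ := h
  obtain ⟨hsS, hmax⟩ := hs
  simp only [Finset.mem_filter, Finset.mem_powerset] at hsS hmax
  have hsA : s ⊂ A := Finset.ssubset_iff_subset_ne.2 ⟨hsS.1, hsS.2.2⟩
  obtain ⟨a, haA, hsa⟩ := Finset.ssubset_iff_exists_subset_erase.1 hsA
  have hcard : (A.erase a).card = d + 1 := by rw [Finset.card_erase_of_mem haA, hA]; rfl
  have := hmax (A.erase a) ⟨Finset.erase_subset a A, ?_, ?_⟩ hsa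
  · rw [this, hcard]
  · rw [← Finset.card_pos, hcard]; omega
  · exact (Finset.erase_ssubset haA).ne

theorem link (hd : 1 ≤ d) (h : IsStandardSphere S d) {v : V} (hv : v ∈ vertexSet S) :
    IsStandardSphere (link S {v}) (d - 1) := by
  obtain ⟨A, hA, rfl⟩ := h
  obtain ⟨s, hs, hvs⟩ := mem_vertexSet.1 hv
  have hvA : v ∈ A := (Finset.mem_powerset.1 (Finset.mem_filter.1 hs).1) hvs
  refine ⟨A.erase v, by rw [Finset.card_erase_of_mem hvA, hA]; omega, Finset.ext fun β => ?_⟩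
  simp only [mem_link_singleton, Finset.mem_filter, Finset.mem_powerset]
  grind

end IsStandardSphere

def stellar (X : Finset (Finset V)) (σ : Finset V) (w : V) : Finset (Finset V) :=
  X.erase σ ∪ (σ.powerset.filter fun τ => τ ≠ σ).image fun τ => insert w τ

theorem mem_stellar {X : Finset (Finset V)} {σ : Finset V} {w : V} (hwσ : w ∉ σ)
    {s : Finset V} :
    s ∈ stellar X σ w ↔ (s ∈ X ∧ s ≠ σ) ∨ (w ∈ s ∧ s.erase w ⊂ σ) := by
  simp only [stellar, Finset.mem_union, Finset.mem_erase, Finset.mem_image, Finset.mem_filter,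
    Finset.mem_powerset, ← Finset.ssubset_iff_subset_ne]
  grind

section Stellar

variable {X : Finset (Finset V)} {σ : Finset V} {w : V}

theorem isComplex_stellar (hX : IsComplex X) (hσ : IsFacet X σ) (hw : w ∉ vertexSet X) :
    IsComplex (stellar X σ w) := by
  have hwσ := notMem_of_notMem_vertexSet hw hσ.1
  refine ⟨fun s hs => ?_, fun s hs t hts ht => ?_⟩
  · rcases (mem_stellar hwσ).1 hs with ⟨hsX, -⟩ | ⟨hws, -⟩
    exacts [hX.1 s hsX, ⟨w, hws⟩]
  · rw [mem_stellar hwσ] at hs ⊢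
    rcases hs with ⟨hsX, hsσ⟩ | ⟨hws, hsσ⟩
    · exact Or.inl ⟨hX.2 s hsX t hts ht, by rintro rfl; exact hsσ (hσ.2 s hsX hts).symm⟩
    · by_cases hwt : w ∈ t
      · exact Or.inr ⟨hwt, lt_of_le_of_lt (Finset.erase_subset_erase w hts) hsσ⟩
      · have htσ : t ⊂ σ := by grind
        exact Or.inl ⟨hX.2 σ hσ.1 t htσ.subset ht, htσ.ne⟩

theorem card_of_isFacet_stellar {d : ℕ} (hfacet : ∀ s, IsFacet X s → s.card = d + 1)
    (hσ : IsFacet X σ) (hw : w ∉ vertexSet X) {s : Finset V}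
    (hs : IsFacet (stellar X σ w) s) : s.card = d + 1 := by
  have hwσ := notMem_of_notMem_vertexSet hw hσ.1
  by_cases hsσ : s.erase w ⊂ σ
  · obtain ⟨a, haσ, hsa⟩ := Finset.ssubset_iff_exists_subset_erase.1 hsσ
    have hcone : insert w (σ.erase a) ∈ stellar X σ w := by
      rw [mem_stellar hwσ]
      grind
    have := hs.2 _ hcone (by grind)
    grind
  · have hsX : s ∈ X ∧ s ≠ σ := by grind [(mem_stellar hwσ).1 hs.1]
    have hws : w ∉ s := notMem_of_notMem_vertexSet hw hsX.1
    refine hfacet s ⟨hsX.1, fun t ht hst => hs.2 t ((mem_stellar hwσ).2 (Or.inl ⟨ht, ?_⟩)) hst⟩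
    rintro rfl
    grind

theorem isStandardSphere_link_stellar_apex {e : ℕ} (hX : IsComplex X) (hσ : IsFacet X σ)
    (hw : w ∉ vertexSet X) (hσe : σ.card = e + 2) :
    IsStandardSphere (link (stellar X σ w) {w}) e := by
  have hwσ := notMem_of_notMem_vertexSet hw hσ.1
  refine ⟨σ, hσe, Finset.ext fun β => ?_⟩
  simp only [mem_link_singleton, mem_stellar hwσ, Finset.mem_filter, Finset.mem_powerset]
  constructor
  · rintro ⟨⟨hβX, -⟩ | ⟨hwβ, -⟩, hwβ', ⟨hX', -⟩ | ⟨-, hβσ⟩⟩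
    · exact absurd (Finset.mem_insert_self w β) (notMem_of_notMem_vertexSet hw hX')
    · rw [Finset.erase_insert hwβ'] at hβσ
      exact ⟨hβσ.subset, hX.1 β hβX, hβσ.ne⟩
    all_goals contradiction
  · rintro ⟨hβσ, hβ, hβσ'⟩
    have hwβ : w ∉ β := fun h => hwσ (hβσ h)
    refine ⟨Or.inl ⟨hX.2 σ hσ.1 β hβσ hβ, hβσ'⟩, hwβ, Or.inr ⟨Finset.mem_insert_self w β, ?_⟩⟩
    rw [Finset.erase_insert hwβ]
    exact Finset.ssubset_iff_subset_ne.2 ⟨hβσ, hβσ'⟩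

theorem link_stellar_of_notMem {u : V} (hσ : IsFacet X σ) (hw : w ∉ vertexSet X)
    (huσ : u ∉ σ) (huw : u ≠ w) : link (stellar X σ w) {u} = link X {u} := by
  have hwσ := notMem_of_notMem_vertexSet hw hσ.1
  ext β
  simp only [mem_link_singleton, mem_stellar hwσ]
  constructor
  · rintro ⟨hβ, huβ, ⟨hX', -⟩ | ⟨-, hσ'⟩⟩
    · have := notMem_of_notMem_vertexSet hw hX'
      grind
    · grind
  · rintro ⟨hβX, huβ, hX'⟩
    have hβσ : β ≠ σ := by
      rintro rfl
      exact huσ (hσ.2 _ hX' (Finset.subset_insert u β) ▸ Finset.mem_insert_self u β)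
    exact ⟨Or.inl ⟨hβX, hβσ⟩, huβ, Or.inl ⟨hX', by grind⟩⟩

theorem link_stellar_of_mem {u : V} (hσ : IsFacet X σ) (hw : w ∉ vertexSet X) (huσ : u ∈ σ) :
    link (stellar X σ w) {u} = stellar (link X {u}) (σ.erase u) w := by
  have hwσ := notMem_of_notMem_vertexSet hw hσ.1
  have hwσu : w ∉ σ.erase u := fun h => hwσ (Finset.mem_of_mem_erase h)
  ext β
  simp only [mem_link_singleton, mem_stellar hwσ, mem_stellar hwσu]
  by_cases hwβ : w ∈ β
  · have hβX : β ∉ X := fun h => notMem_of_notMem_vertexSet hw h hwβ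
    have hβX' : insert u β ∉ X :=
      fun h => notMem_of_notMem_vertexSet hw h (Finset.mem_insert_of_mem hwβ)
    -- `insert u (β.erase w) ⊂ σ` iff `β.erase w ⊂ σ.erase u`, as `u ∈ σ`
    grind
  · have hσX : σ ∈ X := hσ.1
    -- `insert u β ≠ σ` iff `β ≠ σ.erase u`, as `u ∈ σ` and `u ∉ β`
    grind

theorem starringOf_link_stellar_of_mem {u : V} (hX : IsComplex X) (hσ : IsFacet X σ)
    (hw : w ∉ vertexSet X) (huσ : u ∈ σ) (hσ2 : 2 ≤ σ.card) :
    StarringOf (link X {u}) (link (stellar X σ w) {u}) :=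
  ⟨σ.erase u, w, isFacet_link_erase hX hσ huσ hσ2,
    fun h => hw (vertexSet_link_subset X u h), link_stellar_of_mem hσ hw huσ⟩

theorem vertexSet_stellar_subset (hσ : σ ∈ X) :
    vertexSet (stellar X σ w) ⊆ insert w (vertexSet X) := by
  intro u hu
  obtain ⟨s, hs, hus⟩ := mem_vertexSet.1 hu
  simp only [stellar, Finset.mem_union, Finset.mem_erase, Finset.mem_image, Finset.mem_filter,
    Finset.mem_powerset] at hs
  rcases hs with ⟨-, hsX⟩ | ⟨τ, ⟨hτσ, -⟩, rfl⟩
  · exact Finset.mem_insert_of_mem (subset_vertexSet hsX hus)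
  · rcases Finset.mem_insert.1 hus with rfl | huτ
    exacts [Finset.mem_insert_self _ _, Finset.mem_insert_of_mem (subset_vertexSet hσ (hτσ huτ))]

end Stellar

def IsPureComplex (K : Finset (Finset V)) (d : ℕ) : Prop :=
  IsComplex K ∧ ∀ s, IsFacet K s → s.card = d + 1

theorem IsStandardSphere.isPureComplex {S : Finset (Finset V)} {d : ℕ}
    (h : IsStandardSphere S d) : IsPureComplex S d :=
  ⟨h.isComplex, fun _ => h.card_of_isFacet⟩

theorem IsPureComplex.stellar {X : Finset (Finset V)} {σ : Finset V} {w : V} {d : ℕ}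
    (hX : IsPureComplex X d) (hσ : IsFacet X σ) (hw : w ∉ vertexSet X) :
    IsPureComplex (stellar X σ w) d :=
  ⟨isComplex_stellar hX.1 hσ hw, fun _ => card_of_isFacet_stellar hX.2 hσ hw⟩

theorem isPureComplex_of_starrings {S Y : Finset (Finset V)} {d : ℕ}
    (hS : IsStandardSphere S d) (h : Relation.ReflTransGen StarringOf S Y) :
    IsPureComplex Y d := by
  induction h with
  | refl => exact hS.isPureComplex
  | tail _ hYZ ih =>
    obtain ⟨σ, w, hσ, hw, rfl⟩ := hYZ
    exact ih.stellar hσ hw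

theorem isStackedSphere_link_stellar {X : Finset (Finset V)} {σ : Finset V} {w u : V} {d : ℕ}
    (hd : 1 ≤ d) (hX : IsPureComplex X d) (hσ : IsFacet X σ) (hw : w ∉ vertexSet X)
    (hlinks : ∀ x ∈ vertexSet X, IsStackedSphere (link X {x}) (d - 1))
    (hu : u ∈ vertexSet (stellar X σ w)) :
    IsStackedSphere (link (stellar X σ w) {u}) (d - 1) := by
  have hσd := hX.2 σ hσ
  rcases Finset.mem_insert.1 (vertexSet_stellar_subset hσ.1 hu) with rfl | huX
  · exact ⟨_, isStandardSphere_link_stellar_apex hX.1 hσ hw (by omega), .refl⟩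
  by_cases huσ : u ∈ σ
  · obtain ⟨S, hS, hSu⟩ := hlinks u huX
    exact ⟨S, hS, hSu.tail (starringOf_link_stellar_of_mem hX.1 hσ hw huσ (by omega))⟩
  · rw [link_stellar_of_notMem hσ hw huσ (by rintro rfl; exact hw huX)]
    exact hlinks u huX

/-- The link of any vertex in a stacked `d`-sphere (`d ≥ 2`) is a stacked `(d-1)`-sphere. -/
theorem stmt10 {V : Type} [DecidableEq V] (d : ℕ) (hd : 2 ≤ d)
    (X : Finset (Finset V)) (hX : IsStackedSphere X d)
    (v : V) (hv : v ∈ vertexSet X) :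
    IsStackedSphere (link X {v}) (d - 1) := by
  obtain ⟨S, hS, hSX⟩ := hX
  induction hSX generalizing v with
  | refl => exact ⟨_, hS.link (by omega) hv, .refl⟩
  | tail hSY hYZ ih =>
    obtain ⟨σ, w, hσ, hw, rfl⟩ := hYZ
    exact isStackedSphere_link_stellar (by omega) (isPureComplex_of_starrings hS hSY) hσ hw ih hv

end
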